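/- Let k ≥ 1 be an integer and set l = k+4. Then the set R^{k+4}_k has exactly 2(k+4)(k+3) elements (it is a root system of type D_{k+4}). -/

import Mathlib

/-- The symmetric bilinear form on `ℤ^{l+1}` with `B(e₀,e₀) = k`, `B(eᵢ,eᵢ) = -1` for
`1 ≤ i ≤ l`, and `B(eᵢ,eⱼ) = 0` for `i ≠ j`. -/
def bformZ (k l : ℕ) (v w : Fin (l + 1) → ℤ) : ℤ :=
  ((k : ℤ) + 1) * (v 0 * w 0) - ∑ i, v i * w i

/-- The vector `ω' = -(k+2)·e₀ + k·(e₁ + ⋯ + e_l)`. -/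
def omegaZ (k l : ℕ) : Fin (l + 1) → ℤ :=
  fun i => if i = 0 then -((k : ℤ) + 2) else (k : ℤ)

/-- The root system `R^l_k = {v ∈ ℤ^{l+1} : B(v,v) = -2, B(v,ω') = 0}`. -/
def rootSet (k l : ℕ) : Set (Fin (l + 1) → ℤ) :=
  {v | bformZ k l v v = -2 ∧ bformZ k l v (omegaZ k l) = 0}

/-! Write `v = (t, w)` with `t = v 0`. For `k ≠ 0`, `v ∈ R^l_k` says `∑ w = -(k+2) t` and
`∑ w² = k t² + 2`. Exactly when `l = k + 4`, the shifted vector `u = w + t` then satisfies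
`∑ u² = 2` and `∑ u = 2t`; since `∑ u ≡ ∑ u² (mod 2)`, this identifies `R^{k+4}_k` with the
integer vectors of squared norm `2` in `ℤ^{k+4}`. Splitting off the first coordinate, which must be
`0` or `±1`, counts `N₁(n) = 2n` vectors of squared norm `1` and `N₂(n+1) = N₂(n) + 2 N₁(n)`
vectors of squared norm `2`, whence `N₂(k+4) = 2(k+4)(k+3)`. -/

open Finset

def intSphere (n : ℕ) (c : ℤ) : Set (Fin n → ℤ) :=
  {u | ∑ i, u i ^ 2 = c}

section intSphere

variable {n : ℕ} {c : ℤ}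

lemma sq_le_of_mem_intSphere {u : Fin n → ℤ} (hu : u ∈ intSphere n c) (i : Fin n) :
    u i ^ 2 ≤ c :=
  hu ▸ single_le_sum (fun j _ => sq_nonneg (u j)) (mem_univ i)

lemma intSphere_finite (n : ℕ) (c : ℤ) : (intSphere n c).Finite := by
  refine (Set.Finite.pi fun _ => Set.finite_Icc (-c) c).subset fun u hu i _ => ?_
  have := sq_le_of_mem_intSphere hu i
  constructor <;> nlinarith

instance (n : ℕ) (c : ℤ) : Finite (intSphere n c) := (intSphere_finite n c).to_subtype

lemma cons_mem_intSphere_iff (a : ℤ) (u : Fin n → ℤ) :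
    (Fin.cons a u : Fin (n + 1) → ℤ) ∈ intSphere (n + 1) c ↔ u ∈ intSphere n (c - a ^ 2) := by
  simp only [intSphere, Set.mem_ofPred_eq, Fin.sum_univ_succ, Fin.cons_zero, Fin.cons_succ]
  constructor <;> intro h <;> linarith

lemma disjoint_image_cons {a b : ℤ} (hab : a ≠ b) (s t : Set (Fin n → ℤ)) :
    Disjoint (Fin.cons a '' s : Set (Fin (n + 1) → ℤ)) (Fin.cons b '' t) := by
  rw [Set.disjoint_left]
  rintro _ ⟨u, -, rfl⟩ ⟨w, -, h⟩
  exact hab (by simpa using (congrFun h 0).symm)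

lemma intSphere_succ_eq (hc : c < 4) :
    intSphere (n + 1) c = Fin.cons 0 '' intSphere n c ∪
      (Fin.cons 1 '' intSphere n (c - 1) ∪ Fin.cons (-1) '' intSphere n (c - 1)) := by
  ext v
  rw [← Fin.cons_self_tail v, cons_mem_intSphere_iff]
  simp only [Set.mem_union, Set.mem_image, Fin.cons_inj]
  constructor
  · intro hv
    have h0 : 0 ≤ c - v 0 ^ 2 := hv ▸ sum_nonneg fun i _ => sq_nonneg _
    have : v 0 = 0 ∨ v 0 = 1 ∨ v 0 = -1 := by
      have : -1 ≤ v 0 ∧ v 0 ≤ 1 := by constructor <;> nlinarith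
      omega
    rcases this with h | h | h <;> simp_all
  · rintro (⟨w, hw, h0, rfl⟩ | ⟨w, hw, h0, rfl⟩ | ⟨w, hw, h0, rfl⟩) <;> simpa [← h0] using hw

lemma ncard_intSphere_succ (hc : c < 4) :
    (intSphere (n + 1) c).ncard = (intSphere n c).ncard + 2 * (intSphere n (c - 1)).ncard := by
  rw [intSphere_succ_eq hc, Set.ncard_union_eq, Set.ncard_union_eq]
  · simp only [Set.ncard_image_of_injective _ (Fin.cons_right_injective _)]
    ring
  · exact disjoint_image_cons (by norm_num) _ _
  · exact (disjoint_image_cons (by norm_num) _ _).union_right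
      (disjoint_image_cons (by norm_num) _ _)

lemma intSphere_eq_empty_of_neg (hc : c < 0) : intSphere n c = ∅ :=
  Set.eq_empty_of_forall_notMem fun _ hu =>
    hc.not_ge (hu ▸ sum_nonneg fun _ _ => sq_nonneg _)

lemma intSphere_zero_eq_empty (hc : c ≠ 0) : intSphere 0 c = ∅ :=
  Set.eq_empty_of_forall_notMem fun _ hu => hc (by simpa [intSphere] using hu.symm)

lemma ncard_intSphere_zero (n : ℕ) : (intSphere n 0).ncard = 1 := by
  induction n with
  | zero => simp [intSphere]
  | succ n ih => simp [ncard_intSphere_succ, ih, intSphere_eq_empty_of_neg]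

lemma ncard_intSphere_one (n : ℕ) : (intSphere n 1).ncard = 2 * n := by
  induction n with
  | zero => simp [intSphere_zero_eq_empty]
  | succ n ih => rw [ncard_intSphere_succ (by norm_num), ih, sub_self, ncard_intSphere_zero]; ring

lemma ncard_intSphere_two (n : ℕ) : (intSphere (n + 1) 2).ncard = 2 * (n + 1) * n := by
  induction n with
  | zero =>
    rw [ncard_intSphere_succ (by norm_num), intSphere_zero_eq_empty, intSphere_zero_eq_empty] <;>
      simp
  | succ n ih => rw [ncard_intSphere_succ (by norm_num), ih]; norm_num [ncard_intSphere_one]; ring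

end intSphere

lemma even_sum_sq_iff {ι : Type*} (s : Finset ι) (u : ι → ℤ) :
    Even (∑ i ∈ s, u i ^ 2) ↔ Even (∑ i ∈ s, u i) := by
  classical
  induction s using Finset.induction_on with
  | empty => simp
  | insert a s ha ih => simp [sum_insert ha, Int.even_add, Int.even_pow, ih]

section rootSet

variable {k l : ℕ}

lemma bformZ_cons_self (t : ℤ) (w : Fin l → ℤ) :
    bformZ k l (Fin.cons t w) (Fin.cons t w) = k * t ^ 2 - ∑ m, w m ^ 2 := by
  simp only [bformZ, Fin.sum_univ_succ, Fin.cons_zero, Fin.cons_succ, sq]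
  ring

lemma bformZ_cons_omegaZ (t : ℤ) (w : Fin l → ℤ) :
    bformZ k l (Fin.cons t w) (omegaZ k l) = -k * ((k + 2) * t + ∑ m, w m) := by
  simp only [bformZ, omegaZ, Fin.sum_univ_succ, Fin.cons_zero, Fin.cons_succ, Fin.succ_ne_zero,
    if_true, if_false, ← sum_mul]
  ring

lemma cons_mem_rootSet_iff (hk : k ≠ 0) (t : ℤ) (w : Fin l → ℤ) :
    Fin.cons t w ∈ rootSet k l ↔ ∑ m, w m ^ 2 = k * t ^ 2 + 2 ∧ ∑ m, w m = -((k + 2) * t) := by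
  have hk' : (k : ℤ) ≠ 0 := by exact_mod_cast hk
  simp only [rootSet, Set.mem_ofPred_eq, bformZ_cons_self, bformZ_cons_omegaZ, neg_mul,
    neg_eq_zero, mul_eq_zero, hk', false_or]
  constructor <;> rintro ⟨h1, h2⟩ <;> constructor <;> linarith

lemma cons_sub_mem_rootSet_iff (hk : k ≠ 0) (t : ℤ) (u : Fin (k + 4) → ℤ) :
    Fin.cons t (fun m => u m - t) ∈ rootSet k (k + 4) ↔
      u ∈ intSphere (k + 4) 2 ∧ ∑ m, u m = 2 * t := by
  have hsq : ∑ m, (u m - t) ^ 2 = ∑ m, u m ^ 2 - 2 * t * ∑ m, u m + (k + 4) * t ^ 2 := by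
    simp only [sub_sq, sum_add_distrib, sum_sub_distrib, ← sum_mul, ← mul_sum, sum_const,
      card_univ, Fintype.card_fin, nsmul_eq_mul]
    push_cast
    ring
  have hlin : ∑ m, (u m - t) = ∑ m, u m - (k + 4) * t := by
    simp [sum_sub_distrib]
  rw [cons_mem_rootSet_iff hk, hsq, hlin, intSphere, Set.mem_ofPred_eq]
  constructor
  · rintro ⟨h1, h2⟩
    have h3 : ∑ m, u m = 2 * t := by linarith
    exact ⟨by linear_combination h1 + 2 * t * h3, h3⟩
  · rintro ⟨h1, h2⟩
    exact ⟨by linear_combination h1 - 2 * t * h2, by linarith⟩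

lemma ncard_rootSet_eq_ncard_intSphere (hk : k ≠ 0) :
    (rootSet k (k + 4)).ncard = (intSphere (k + 4) 2).ncard := by
  let half (u : Fin (k + 4) → ℤ) : ℤ := (∑ m, u m) / 2
  let lift (u : Fin (k + 4) → ℤ) : Fin (k + 5) → ℤ := Fin.cons (half u) fun m => u m - half u
  have hlift : Function.Injective lift := by
    intro u u' h
    have h0 : half u = half u' := by simpa [lift] using congrFun h 0
    funext m
    simpa [lift, h0] using congrFun h m.succ
  suffices rootSet k (k + 4) = lift '' intSphere (k + 4) 2 by
    rw [this, Set.ncard_image_of_injective _ hlift]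
  ext v
  constructor
  · intro hv
    set u : Fin (k + 4) → ℤ := fun m => v m.succ + v 0
    have hv_eq : Fin.cons (v 0) (fun m => u m - v 0) = v := by
      simp only [u, add_sub_cancel_right]
      exact Fin.cons_self_tail v
    obtain ⟨hu, hsum⟩ := (cons_sub_mem_rootSet_iff hk (v 0) u).1 (hv_eq ▸ hv)
    have hhalf : half u = v 0 := by simp [half, hsum]
    exact ⟨u, hu, by simp only [lift, hhalf, hv_eq]⟩
  · rintro ⟨u, hu, rfl⟩
    have heven : Even (∑ m, u m) := (even_sum_sq_iff _ _).1 (hu ▸ even_two)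
    exact (cons_sub_mem_rootSet_iff hk _ u).2 ⟨hu, (Int.two_mul_ediv_two_of_even heven).symm⟩

end rootSet

/-- For `l = k+4`, the root system `R^{k+4}_k` (of type `D_{k+4}`) has exactly
`2(k+4)(k+3)` elements. -/
theorem rootSet_card_k_plus_four (k : ℕ) (hk : 1 ≤ k) :
    (rootSet k (k + 4)).ncard = 2 * (k + 4) * (k + 3) := by
  rw [ncard_rootSet_eq_ncard_intSphere (by omega)]
  exact ncard_intSphere_two (k + 3)
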